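/- With the notation of the Newton–Puiseux factorization setup, set A = { i : ord_t(φ_i − φ_γ) ≥ Mξ }. Then the polynomial P_{f,γ,ξ} has at least two distinct complex roots if and only if there exist indices i ≠ j in A with ord_t(φ_i − φ_j) = Mξ; equivalently, the horn-neighbourhood of γ of exponent ξ is a root horn, i.e. it coincides with the horn H_A' of a bunch A' of Newton–Puiseux roots of f with height h(A') = ξ. In this case the multiplicity of the bunch equals the degree of the polynomial: m_{A'} = |A| = deg P_{f,γ,ξ}. (Proposition 7.1 of the paper, characterizing root horns.) -/

import Mathlib

/-!  Setup (Proposition 7.1 of the paper).  `f : (ℝ²,0) → (ℝ,0)` is mini-regular in `x` of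
order `m`, and `f(x, t^M) = U(x,t)·∏ᵢ (x − φᵢ(t))` is a Newton–Puiseux factorization, with
`U(x,t) = Σₙ Uₙ(t) xⁿ` analytic, `U(0,0) ≠ 0`, and `φ₁, …, φ_m` complex power series vanishing
at `0`.  Here the factorized data `U, φ` is taken as the primitive datum.  For a real demi-branch
`x = λ(y)` with `φγ(t) = λ(t^M)` and a rational `ξ > 1` with `e = Mξ ∈ ℕ`, the expansion
`f(φγ(t) + z·t^e, t^M) = Σ_k F_k(z) t^k` is the power series `Gser` below, with coefficients
`F_k ∈ ℂ[z]`; `N = min{k : F_k ≠ 0}` and `P_{f,γ,ξ} = F_N`. -/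

/-- Substitution of a power series `q` with vanishing constant term for `x` in
`U(x,t) = Σₙ Uₙ(t) xⁿ` (the truncated sum is the full one since `ord qⁿ ≥ n`). -/
noncomputable def substX (U : ℕ → PowerSeries ℂ) (q : PowerSeries (Polynomial ℂ)) :
    PowerSeries (Polynomial ℂ) :=
  PowerSeries.mk fun k => ∑ n ∈ Finset.range (k + 1),
    PowerSeries.coeff k
      (PowerSeries.map (Polynomial.C : ℂ →+* Polynomial ℂ) (U n) * q ^ n)

/-- The complexification of the real power series `φγ`. -/
noncomputable def cxify (φγ : PowerSeries ℝ) : PowerSeries ℂ :=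
  PowerSeries.map (algebraMap ℝ ℂ) φγ

/-- `xsub = φγ(t) + z·t^e`, as a power series in `t` with coefficients in `ℂ[z]`. -/
noncomputable def xsub (φγ : PowerSeries ℝ) (e : ℕ) : PowerSeries (Polynomial ℂ) :=
  PowerSeries.map (Polynomial.C : ℂ →+* Polynomial ℂ) (cxify φγ)
    + PowerSeries.monomial e (Polynomial.X : Polynomial ℂ)

/-- `Gser = U(xsub, t) · ∏ᵢ (xsub − φᵢ(t)) = f(φγ(t) + z t^e, t^M) = Σ_k F_k(z) t^k`. -/
noncomputable def Gser (m : ℕ) (U : ℕ → PowerSeries ℂ) (φ : Fin m → PowerSeries ℂ)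
    (φγ : PowerSeries ℝ) (e : ℕ) : PowerSeries (Polynomial ℂ) :=
  substX U (xsub φγ e) *
    ∏ i : Fin m, (xsub φγ e - PowerSeries.map (Polynomial.C : ℂ →+* Polynomial ℂ) (φ i))

open scoped Classical in
/-- `A = {i : ord (φᵢ − φγ) ≥ e}`. -/
noncomputable def Aset (m e : ℕ) (φ : Fin m → PowerSeries ℂ) (φγ : PowerSeries ℝ) :
    Finset (Fin m) :=
  Finset.univ.filter fun i =>
    ∀ n < e, PowerSeries.coeff n (φ i) = PowerSeries.coeff n (cxify φγ)

/-- For `i ∈ A`, the coefficient `cᵢ` of `t^e` in `φᵢ − φγ`. -/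
noncomputable def cCoeff (e : ℕ) {m : ℕ} (φ : Fin m → PowerSeries ℂ) (φγ : PowerSeries ℝ)
    (i : Fin m) : ℂ :=
  PowerSeries.coeff e (φ i) - PowerSeries.coeff e (cxify φγ)

/-- For `i ∉ A`, the order `ord (φᵢ − φγ)`. -/
noncomputable def dOrd {m : ℕ} (φ : Fin m → PowerSeries ℂ) (φγ : PowerSeries ℝ)
    (i : Fin m) : ℕ :=
  sInf {n : ℕ | PowerSeries.coeff n (φ i) ≠ PowerSeries.coeff n (cxify φγ)}

/-- For `i ∉ A`, the leading coefficient `bᵢ` of `φγ − φᵢ`. -/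
noncomputable def bCoeff {m : ℕ} (φ : Fin m → PowerSeries ℂ) (φγ : PowerSeries ℝ)
    (i : Fin m) : ℂ :=
  PowerSeries.coeff (dOrd φ φγ i) (cxify φγ) - PowerSeries.coeff (dOrd φ φγ i) (φ i)

/-- `N = min{k : F_k ≠ 0}`. -/
noncomputable def Nord (m : ℕ) (U : ℕ → PowerSeries ℂ) (φ : Fin m → PowerSeries ℂ)
    (φγ : PowerSeries ℝ) (e : ℕ) : ℕ :=
  sInf {k : ℕ | PowerSeries.coeff k (Gser m U φ φγ e) ≠ 0}

/-- `P_{f,γ,ξ} = F_N`. -/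
noncomputable def Ppoly (m : ℕ) (U : ℕ → PowerSeries ℂ) (φ : Fin m → PowerSeries ℂ)
    (φγ : PowerSeries ℝ) (e : ℕ) : Polynomial ℂ :=
  PowerSeries.coeff (Nord m U φ φγ e) (Gser m U φ φγ e)

/-- `ord (φᵢ − φⱼ) ≥ e`, i.e. the contact order of the two Newton–Puiseux roots is `≥ ξ = e/M`. -/
def OrdGE {m : ℕ} (φ : Fin m → PowerSeries ℂ) (e : ℕ) (i j : Fin m) : Prop :=
  ∀ n < e, PowerSeries.coeff n (φ i) = PowerSeries.coeff n (φ j)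

/-- `S` is a bunch of Newton–Puiseux roots of height `ξ = e/M`: a maximal set of at least two
roots with pairwise contact orders `≥ ξ`, the minimum of these contact orders being exactly
`ξ`.  (Its horn `H_S` is the horn-neighbourhood of exponent `ξ` of any demi-branch agreeing
with the common truncation of the roots of `S` below the exponent `ξ`, and its multiplicity
`m_S` is the number of roots in `S`.) -/
def IsBunch {m : ℕ} (φ : Fin m → PowerSeries ℂ) (e : ℕ) (S : Finset (Fin m)) : Prop :=
  2 ≤ S.card ∧
  (∀ i ∈ S, ∀ j ∈ S, OrdGE φ e i j) ∧
  (∃ i ∈ S, ∃ j ∈ S, PowerSeries.coeff e (φ i) ≠ PowerSeries.coeff e (φ j)) ∧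
  ∀ i ∉ S, ∃ j ∈ S, ¬ OrdGE φ e i j

/-! Substituting `x = φγ(t) + z tᵉ`, the factor `x − φᵢ(t)` has `t`-adic leading
term `(z − cᵢ) tᵉ` when `i ∈ A` and `bᵢ t^{dᵢ}` with `bᵢ ≠ 0` otherwise, while `U` contributes the
unit `U(0,0)`. Hence `P_{f,γ,ξ} = d · ∏_{i ∈ A} (z − cᵢ)` with `d ≠ 0`: its roots are the `cᵢ`,
`i ∈ A`, and its degree is `|A|`. Two roots differ exactly when two roots of `A` differ at order
`e`, and then `A` is a bunch of height `ξ`, its roots agreeing with `φγ` below order `e`. -/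

namespace PowerSeries

variable {R : Type*} [CommSemiring R]

theorem exists_eq_X_pow_mul_of_coeff_eq_zero {a : ℕ} {f : R⟦X⟧}
    (hf : ∀ n < a, coeff n f = 0) : ∃ g, f = X ^ a * g ∧ constantCoeff g = coeff a f := by
  obtain ⟨g, rfl⟩ := X_pow_dvd_iff.mpr hf
  exact ⟨g, rfl, by simpa using (coeff_X_pow_mul g a 0).symm⟩

theorem coeff_X_pow_mul_self (k : ℕ) (g : R⟦X⟧) : coeff k (X ^ k * g) = constantCoeff g := by
  simpa using coeff_X_pow_mul g k 0

theorem sInf_coeff_ne_zero_X_pow_mul {k : ℕ} {g : R⟦X⟧} (hg : constantCoeff g ≠ 0) :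
    sInf {n | coeff n (X ^ k * g) ≠ 0} = k := by
  have hk : coeff k (X ^ k * g) ≠ 0 := (coeff_X_pow_mul_self k g).trans_ne hg
  refine le_antisymm (Nat.sInf_le hk) (le_csInf ⟨k, hk⟩ fun n hn => ?_)
  by_contra! hnk
  simp [coeff_X_pow_mul', hnk.not_ge] at hn

end PowerSeries

namespace Polynomial

variable {K ι : Type*} [Field K]

theorem isRoot_C_mul_prod_X_sub_C {d : K} (hd : d ≠ 0) (s : Finset ι) (c : ι → K) (z : K) :
    (C d * ∏ i ∈ s, (X - C (c i))).IsRoot z ↔ ∃ i ∈ s, c i = z := by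
  rw [IsRoot.def, eval_mul, eval_C, mul_eq_zero, or_iff_right hd, ← IsRoot.def, isRoot_prod]
  simp only [root_X_sub_C]

theorem exists_two_roots_C_mul_prod_X_sub_C_iff {d : K} (hd : d ≠ 0) (s : Finset ι)
    (c : ι → K) :
    (∃ z w, z ≠ w ∧ (C d * ∏ i ∈ s, (X - C (c i))).IsRoot z ∧
        (C d * ∏ i ∈ s, (X - C (c i))).IsRoot w) ↔
      ∃ i ∈ s, ∃ j ∈ s, c i ≠ c j := by
  simp only [isRoot_C_mul_prod_X_sub_C hd]
  constructor
  · rintro ⟨_, _, hzw, ⟨i, hi, rfl⟩, ⟨j, hj, rfl⟩⟩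
    exact ⟨i, hi, j, hj, hzw⟩
  · rintro ⟨i, hi, j, hj, hij⟩
    exact ⟨c i, c j, hij, ⟨i, hi, rfl⟩, ⟨j, hj, rfl⟩⟩

theorem natDegree_C_mul_prod_X_sub_C {d : K} (hd : d ≠ 0) (s : Finset ι) (c : ι → K) :
    (C d * ∏ i ∈ s, (X - C (c i))).natDegree = s.card := by
  rw [natDegree_C_mul hd, natDegree_finsetProd_X_sub_C_eq_card]

end Polynomial

section RootHorn

open PowerSeries

variable {m e : ℕ} {φ : Fin m → PowerSeries ℂ} {φγ : PowerSeries ℝ}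

theorem mem_Aset_iff {i : Fin m} :
    i ∈ Aset m e φ φγ ↔ ∀ n < e, coeff n (φ i) = coeff n (cxify φγ) := by
  classical
  simp [Aset]

theorem dOrd_lt_of_notMem_Aset {i : Fin m} (hi : i ∉ Aset m e φ φγ) :
    dOrd φ φγ i < e ∧ coeff (dOrd φ φγ i) (φ i) ≠ coeff (dOrd φ φγ i) (cxify φγ) := by
  rw [mem_Aset_iff] at hi
  push Not at hi
  obtain ⟨n, hn, hne⟩ := hi
  exact ⟨(Nat.sInf_le hne).trans_lt hn,
    Nat.sInf_mem (s := {k | coeff k (φ i) ≠ coeff k (cxify φγ)}) ⟨n, hne⟩⟩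

theorem coeff_eq_of_lt_dOrd {i : Fin m} {n : ℕ} (hn : n < dOrd φ φγ i) :
    coeff n (φ i) = coeff n (cxify φγ) :=
  not_not.mp (Nat.notMem_of_lt_sInf hn)

theorem coeff_xsub_sub_map_C (i : Fin m) (n : ℕ) :
    coeff n (xsub φγ e - map Polynomial.C (φ i)) =
      Polynomial.C (coeff n (cxify φγ) - coeff n (φ i)) + if n = e then Polynomial.X else 0 := by
  simp only [xsub, coeff_map, coeff_monomial, map_sub, map_add]
  ring

theorem constantCoeff_substX (U : ℕ → PowerSeries ℂ) (q : PowerSeries (Polynomial ℂ)) :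
    constantCoeff (substX U q) = Polynomial.C (constantCoeff (U 0)) := by
  rw [← coeff_zero_eq_constantCoeff_apply, substX, coeff_mk, zero_add, Finset.sum_range_one,
    pow_zero, mul_one, coeff_map, coeff_zero_eq_constantCoeff_apply]

theorem cCoeff_eq_cCoeff_iff {i j : Fin m} :
    cCoeff e φ φγ i = cCoeff e φ φγ j ↔ coeff e (φ i) = coeff e (φ j) :=
  sub_left_inj

theorem exists_xsub_sub_map_C_eq_X_pow_mul (i : Fin m) :
    ∃ a g, xsub φγ e - map Polynomial.C (φ i) = X ^ a * g ∧
      constantCoeff g = if i ∈ Aset m e φ φγ then Polynomial.X - Polynomial.C (cCoeff e φ φγ i)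
        else Polynomial.C (bCoeff φ φγ i) := by
  by_cases hi : i ∈ Aset m e φ φγ
  · refine ⟨e, ?_⟩
    obtain ⟨g, hfg, hg⟩ := exists_eq_X_pow_mul_of_coeff_eq_zero (a := e)
      (f := xsub φγ e - map Polynomial.C (φ i)) fun n hn => by
        simp [coeff_xsub_sub_map_C, mem_Aset_iff.mp hi n hn, hn.ne]
    refine ⟨g, hfg, ?_⟩
    rw [hg, if_pos hi, coeff_xsub_sub_map_C, cCoeff, if_pos rfl]
    simp only [Polynomial.C_sub]
    ring
  · obtain ⟨hlt, -⟩ := dOrd_lt_of_notMem_Aset hi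
    obtain ⟨g, hfg, hg⟩ := exists_eq_X_pow_mul_of_coeff_eq_zero (a := dOrd φ φγ i)
      (f := xsub φγ e - map Polynomial.C (φ i)) fun n hn => by
        simp [coeff_xsub_sub_map_C, coeff_eq_of_lt_dOrd hn, (hn.trans hlt).ne]
    refine ⟨_, g, hfg, ?_⟩
    rw [hg, if_neg hi, coeff_xsub_sub_map_C, if_neg hlt.ne, add_zero, bCoeff]

theorem bCoeff_ne_zero {i : Fin m} (hi : i ∉ Aset m e φ φγ) : bCoeff φ φγ i ≠ 0 :=
  sub_ne_zero.mpr (dOrd_lt_of_notMem_Aset hi).2.symm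

theorem exists_Gser_eq_X_pow_mul (U : ℕ → PowerSeries ℂ) (hU : constantCoeff (U 0) ≠ 0) :
    ∃ k g d, Gser m U φ φγ e = X ^ k * g ∧ d ≠ 0 ∧
      constantCoeff g = Polynomial.C d *
        ∏ i ∈ Aset m e φ φγ, (Polynomial.X - Polynomial.C (cCoeff e φ φγ i)) := by
  classical
  choose a g hfg hg using
    exists_xsub_sub_map_C_eq_X_pow_mul (m := m) (e := e) (φ := φ) (φγ := φγ)
  set A := Aset m e φ φγ
  refine ⟨∑ i, a i, substX U (xsub φγ e) * ∏ i, g i,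
    constantCoeff (U 0) * ∏ i ∈ Finset.univ.filter (· ∉ A), bCoeff φ φγ i, ?_, ?_, ?_⟩
  · rw [Gser, Finset.prod_congr rfl fun i _ => hfg i, Finset.prod_mul_distrib,
      Finset.prod_pow_eq_pow_sum]
    ring
  · exact mul_ne_zero hU (Finset.prod_ne_zero_iff.mpr fun i hi =>
      bCoeff_ne_zero (Finset.mem_filter.mp hi).2)
  · rw [map_mul, map_prod, constantCoeff_substX, Finset.prod_congr rfl fun i _ => hg i,
      Finset.prod_ite, Finset.filter_mem_eq_inter, Finset.univ_inter, map_mul, map_prod]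
    ring

theorem exists_Ppoly_eq_C_mul_prod (U : ℕ → PowerSeries ℂ) (hU : constantCoeff (U 0) ≠ 0) :
    ∃ d ≠ 0, Ppoly m U φ φγ e =
      Polynomial.C d * ∏ i ∈ Aset m e φ φγ, (Polynomial.X - Polynomial.C (cCoeff e φ φγ i)) := by
  obtain ⟨k, g, d, hG, hd, hg⟩ := exists_Gser_eq_X_pow_mul (e := e) (φ := φ) (φγ := φγ) U hU
  have hg0 : constantCoeff g ≠ 0 := by
    rw [hg]
    exact mul_ne_zero (Polynomial.C_ne_zero.mpr hd)
      (Finset.prod_ne_zero_iff.mpr fun i _ => Polynomial.X_sub_C_ne_zero _)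
  refine ⟨d, hd, ?_⟩
  rw [Ppoly, Nord, hG, sInf_coeff_ne_zero_X_pow_mul hg0, coeff_X_pow_mul_self, hg]

theorem isBunch_Aset
    (h : ∃ i ∈ Aset m e φ φγ, ∃ j ∈ Aset m e φ φγ, coeff e (φ i) ≠ coeff e (φ j)) :
    IsBunch φ e (Aset m e φ φγ) := by
  obtain ⟨i₀, hi₀, j₀, hj₀, hco⟩ := h
  have hij₀ : i₀ ≠ j₀ := ne_of_apply_ne (fun k => coeff e (φ k)) hco
  refine ⟨Finset.one_lt_card.mpr ⟨i₀, hi₀, j₀, hj₀, hij₀⟩, ?_, ⟨i₀, hi₀, j₀, hj₀, hco⟩,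
    fun i hi => ⟨i₀, hi₀, fun hii₀ => hi ?_⟩⟩
  · intro i hi j hj n hn
    exact (mem_Aset_iff.mp hi n hn).trans (mem_Aset_iff.mp hj n hn).symm
  · exact mem_Aset_iff.mpr fun n hn => (hii₀ n hn).trans (mem_Aset_iff.mp hi₀ n hn)

end RootHorn

theorem prop71_root_horn_characterisation_general
    (m e : ℕ)
    (U : ℕ → PowerSeries ℂ) (hU : PowerSeries.constantCoeff (U 0) ≠ 0)
    (φ : Fin m → PowerSeries ℂ)
    (φγ : PowerSeries ℝ) :
    ((∃ z w : ℂ, z ≠ w ∧ (Ppoly m U φ φγ e).IsRoot z ∧ (Ppoly m U φ φγ e).IsRoot w) ↔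
      ∃ i ∈ Aset m e φ φγ, ∃ j ∈ Aset m e φ φγ, i ≠ j ∧
        PowerSeries.coeff e (φ i) ≠ PowerSeries.coeff e (φ j)) ∧
    ((∃ z w : ℂ, z ≠ w ∧ (Ppoly m U φ φγ e).IsRoot z ∧ (Ppoly m U φ φγ e).IsRoot w) →
      IsBunch φ e (Aset m e φ φγ) ∧
      (Aset m e φ φγ).card = (Ppoly m U φ φγ e).natDegree) := by
  obtain ⟨d, hd, hP⟩ := exists_Ppoly_eq_C_mul_prod (e := e) (φ := φ) (φγ := φγ) U hU
  have hroots : (∃ z w : ℂ, z ≠ w ∧ (Ppoly m U φ φγ e).IsRoot z ∧ (Ppoly m U φ φγ e).IsRoot w) ↔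
      ∃ i ∈ Aset m e φ φγ, ∃ j ∈ Aset m e φ φγ, i ≠ j ∧
        PowerSeries.coeff e (φ i) ≠ PowerSeries.coeff e (φ j) := by
    rw [hP, Polynomial.exists_two_roots_C_mul_prod_X_sub_C_iff hd]
    constructor
    · rintro ⟨i, hi, j, hj, hij⟩
      exact ⟨i, hi, j, hj, ne_of_apply_ne _ hij, cCoeff_eq_cCoeff_iff.not.mp hij⟩
    · rintro ⟨i, hi, j, hj, -, hij⟩
      exact ⟨i, hi, j, hj, cCoeff_eq_cCoeff_iff.not.mpr hij⟩
  refine ⟨hroots, fun h => ⟨isBunch_Aset ?_, ?_⟩⟩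
  · obtain ⟨i, hi, j, hj, -, hij⟩ := hroots.mp h
    exact ⟨i, hi, j, hj, hij⟩
  · rw [hP, Polynomial.natDegree_C_mul_prod_X_sub_C hd]

/-- **Proposition 7.1.**  With `A = {i : ord(φᵢ − φγ) ≥ Mξ}` (`e = Mξ`), the polynomial
`P_{f,γ,ξ}` has at least two distinct complex roots if and only if there are `i ≠ j` in `A`
with `ord (φᵢ − φⱼ) = Mξ`; equivalently, the horn-neighbourhood `H_ξ(γ)` is a root horn: it is
the horn `H_{A'}` of a bunch `A' ( = A)` of Newton–Puiseux roots of `f` of height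
`h(A') = ξ`.  In this case the multiplicity of the bunch equals the degree of the polynomial:
`m_{A'} = |A| = deg P_{f,γ,ξ}`. -/
theorem prop71_root_horn_characterisation
    (m M e : ℕ) (hm : 0 < m) (hM : 0 < M) (he : M < e)
    (U : ℕ → PowerSeries ℂ) (hU : PowerSeries.constantCoeff (U 0) ≠ 0)
    (φ : Fin m → PowerSeries ℂ) (hφ0 : ∀ i, PowerSeries.constantCoeff (φ i) = 0)
    (φγ : PowerSeries ℝ) (hφγ0 : PowerSeries.constantCoeff φγ = 0) :
    ((∃ z w : ℂ, z ≠ w ∧ (Ppoly m U φ φγ e).IsRoot z ∧ (Ppoly m U φ φγ e).IsRoot w) ↔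
      ∃ i ∈ Aset m e φ φγ, ∃ j ∈ Aset m e φ φγ, i ≠ j ∧
        PowerSeries.coeff e (φ i) ≠ PowerSeries.coeff e (φ j)) ∧
    ((∃ z w : ℂ, z ≠ w ∧ (Ppoly m U φ φγ e).IsRoot z ∧ (Ppoly m U φ φγ e).IsRoot w) →
      IsBunch φ e (Aset m e φ φγ) ∧
      (Aset m e φ φγ).card = (Ppoly m U φ φγ e).natDegree) :=
  prop71_root_horn_characterisation_general m e U hU φ φγ
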